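/- The topology of a C-space is always finer than the Scott topology of its specialization preorder: every Scott-open set of (X, ≤_S) is open in S. -/

import Mathlib

/-- The specialization preorder: x ≤ y iff every open set containing x contains y. -/
def sle {X : Type*} [TopologicalSpace X] (x y : X) : Prop :=
  ∀ U : Set X, IsOpen U → x ∈ U → y ∈ U

/-- The core of a point. -/
def core {X : Type*} [TopologicalSpace X] (x : X) : Set X := {y | sle x y}

/-! In a C-space the points `u` with `x ∈ interior (core u)` form a directed set whose least
upper bound in the specialization preorder is `x` itself. A Scott-open `U ∋ x` therefore
contains such a `u`, and then, being an upper set, the whole open neighbourhood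
`interior (core u)` of `x`. -/

def IsCSpace (X : Type*) [TopologicalSpace X] : Prop :=
  ∀ (x : X) (U : Set X), IsOpen U → x ∈ U → ∃ u : X, x ∈ interior (core u) ∧ core u ⊆ U

section

variable {X : Type*} [TopologicalSpace X]

/-- The set `⇓x` of points way below `x`, in the form it takes in a C-space. -/
def wayBelow (x : X) : Set X := {u | x ∈ interior (core u)}

theorem sle_refl (x : X) : sle x x := fun _ _ hx => hx

theorem sle_of_mem_wayBelow {x u : X} (hu : u ∈ wayBelow x) : sle u x :=
  interior_subset hu

theorem core_subset_of_isUpper {U : Set X} (hUp : ∀ x ∈ U, ∀ y, sle x y → y ∈ U) {u : X}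
    (hu : u ∈ U) : core u ⊆ U :=
  fun y hy => hUp u hu y hy

namespace IsCSpace

theorem wayBelow_nonempty (hC : IsCSpace X) (x : X) : (wayBelow x).Nonempty :=
  let ⟨u, hu, _⟩ := hC x Set.univ isOpen_univ (Set.mem_univ x)
  ⟨u, hu⟩

theorem wayBelow_directed (hC : IsCSpace X) (x : X) :
    ∀ a ∈ wayBelow x, ∀ b ∈ wayBelow x, ∃ c ∈ wayBelow x, sle a c ∧ sle b c := by
  intro a ha b hb
  obtain ⟨c, hc, hsub⟩ := hC x (interior (core a) ∩ interior (core b))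
    (isOpen_interior.inter isOpen_interior) ⟨ha, hb⟩
  obtain ⟨hca, hcb⟩ := hsub (sle_refl c)
  exact ⟨c, hc, interior_subset hca, interior_subset hcb⟩

theorem sle_of_forall_wayBelow_sle (hC : IsCSpace X) {x z : X}
    (hz : ∀ d ∈ wayBelow x, sle d z) : sle x z :=
  fun V hV hxV =>
    let ⟨u, hu, hsub⟩ := hC x V hV hxV
    hsub (hz u hu)

end IsCSpace

end

/-- The topology of a C-space is finer than the Scott topology of
its specialization preorder. -/
theorem stmt_12 {X : Type*} [TopologicalSpace X]
    (hC : ∀ (x : X) (U : Set X), IsOpen U → x ∈ U →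
      ∃ u : X, x ∈ interior (core u) ∧ core u ⊆ U) :
    ∀ U : Set X,
      (∀ x ∈ U, ∀ y, sle x y → y ∈ U) →
      (∀ D : Set X, D.Nonempty → (∀ a ∈ D, ∀ b ∈ D, ∃ c ∈ D, sle a c ∧ sle b c) →
        ∀ y, ((∀ d ∈ D, sle d y) ∧ ∀ z, (∀ d ∈ D, sle d z) → sle y z) →
          y ∈ U → (D ∩ U).Nonempty) →
      IsOpen U := by
  have hC : IsCSpace X := hC
  intro U hUp hScott
  refine isOpen_iff_forall_mem_open.mpr fun x hx => ?_
  obtain ⟨u, hu, huU⟩ := hScott (wayBelow x)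
    (hC.wayBelow_nonempty x) (hC.wayBelow_directed x) x
    ⟨fun _ => sle_of_mem_wayBelow, fun _ => hC.sle_of_forall_wayBelow_sle⟩ hx
  exact ⟨interior (core u), interior_subset.trans (core_subset_of_isUpper hUp huU),
    isOpen_interior, hu⟩
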